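/- arXiv:1206.1714 — 3 statements merged into one kernel-verified Lean document; each statement's English description precedes it below -/
import Mathlib

section
/- Let S be a semigroup with rational word problem (with respect to some, equivalently any, finite generating set). Then every finitely generated subsemigroup T of S has rational word problem. -/
/-- An asynchronous two-tape finite state automaton: in each step it reads at
most one symbol from each tape. -/
structure AsyncFSA (A : Type*) (B : Type*) where
  Q : Type
  [fin : Finite Q]
  init : Q
  accept : Set Q
  trans : Q → Option A → Option B → Q → Prop

namespace AsyncFSA

variable {A B : Type*}

/-- Computations of an asynchronous automaton. -/
inductive Reaches (M : AsyncFSA A B) : M.Q → List A → List B → M.Q → Prop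
  | refl (q : M.Q) : Reaches M q [] [] q
  | step {p q r : M.Q} {a : Option A} {b : Option B} {u : List A} {v : List B} :
      M.trans p a b q → Reaches M q u v r →
      Reaches M p (a.toList ++ u) (b.toList ++ v) r

/-- Acceptance of a pair of strings. -/
def Accepts (M : AsyncFSA A B) (u : List A) (v : List B) : Prop :=
  ∃ q ∈ M.accept, M.Reaches M.init u v q

end AsyncFSA

/-- A relation on strings is rational if it is decided by an asynchronous
two-tape finite state automaton. -/
def IsRationalRel {A B : Type*} (R : Set (List A × List B)) : Prop :=
  ∃ M : AsyncFSA A B, ∀ p : List A × List B, p ∈ R ↔ M.Accepts p.1 p.2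

/-- Pad a pair of strings to equal length, using `none` as padding symbol. -/
def padPair {A : Type*} (p : List A × List A) : List (Option A × Option A) :=
  List.zip (p.1.map some ++ List.replicate (p.2.length - p.1.length) none)
           (p.2.map some ++ List.replicate (p.1.length - p.2.length) none)

/-- A relation on strings is regular if a synchronous two-tape finite state
automaton (a finite automaton over the padded pair alphabet) accepts a padded
pair exactly when the pair is in the relation. -/
def IsRegularRel {A : Type*} (R : Set (List A × List A)) : Prop :=
  ∃ (Q : Type) (_ : Fintype Q) (M : DFA (Option A × Option A) Q),
    ∀ p : List A × List A, p ∈ R ↔ padPair p ∈ M.accepts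

/-- A language is regular if accepted by a finite state automaton. -/
def IsRegularLang {A : Type*} (L : Set (List A)) : Prop :=
  ∃ (Q : Type) (_ : Fintype Q) (M : DFA A Q), ∀ w, w ∈ L ↔ w ∈ M.accepts

/-- Evaluation of a word in a semigroup (`none` for the empty word). -/
def evalWord {α : Type*} {S : Type*} [Semigroup S] (f : α → S) : List α → Option S
  | [] => none
  | a :: l => some (List.foldl (fun s x => s * f x) (f a) l)

/-- The semigroup word problem with respect to a set `A` of elements:
pairs of nonempty strings over `A` representing the same element. -/
def SWP {S : Type*} [Semigroup S] (A : Set S) : Set (List ↥A × List ↥A) :=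
  {p | p.1 ≠ [] ∧ p.2 ≠ [] ∧
    evalWord Subtype.val p.1 = evalWord Subtype.val p.2}

/-- The monoid word problem with respect to a set `A` of elements. -/
def MWP {M : Type*} [Monoid M] (A : Set M) : Set (List ↥A × List ↥A) :=
  {p | (p.1.map Subtype.val).prod = (p.2.map Subtype.val).prod}

/-- A semigroup has rational word problem if it has a finite generating set
with rational word problem. -/
def HasRationalWP (S : Type*) [Semigroup S] : Prop :=
  ∃ A : Set S, A.Finite ∧ Subsemigroup.closure A = ⊤ ∧ IsRationalRel (SWP A)

/-!
Write every generator `c ∈ C` as a nonempty word `φ c` over `A`. Then two words over `C` are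
equal in `S` exactly when their images under the morphism `List.flatMap φ` are, so the word
problem over `C` is the preimage of the one over `A` under `List.flatMap φ` on both tapes.
Rational relations are closed under such preimages: an automaton for the preimage reads a letter
`c` into a buffer and feeds `φ c` to the automaton for `SWP A` letter by letter; since `C` is
finite only finitely many buffer contents occur.
-/

namespace AsyncFSA

variable {A B C : Type*}

theorem Reaches.append {M : AsyncFSA A B} {p q r : M.Q} {u v u' v'}
    (h₁ : M.Reaches p u v q) (h₂ : M.Reaches q u' v' r) :
    M.Reaches p (u ++ u') (v ++ v') r := by
  induction h₁ with
  | refl => exact h₂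
  | step t _ ih => simpa only [List.append_assoc] using Reaches.step t (ih h₂)

def swap (M : AsyncFSA A B) : AsyncFSA B A where
  Q := M.Q
  fin := M.fin
  init := M.init
  accept := M.accept
  trans p b a q := M.trans p a b q

theorem Reaches.swap {M : AsyncFSA A B} {p q : M.Q} {u v}
    (h : M.Reaches p u v q) : M.swap.Reaches p v u q := by
  induction h with
  | refl => exact .refl _
  | step t _ ih => exact .step t ih

theorem accepts_swap (M : AsyncFSA A B) (u : List A) (v : List B) :
    M.swap.Accepts v u ↔ M.Accepts u v :=
  ⟨fun ⟨q, hq, h⟩ => ⟨q, hq, h.swap⟩, fun ⟨q, hq, h⟩ => ⟨q, hq, h.swap⟩⟩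

section PullLeft

variable (M : AsyncFSA A B) (φ : C → List A)

def bufferSet : Set (List A) := insert [] (⋃ c, {l | l <:+ φ c})

variable {φ} in
theorem bufferSet_finite [Finite C] : (bufferSet φ).Finite :=
  .insert _ <| Set.finite_iUnion fun c => by
    simpa only [List.mem_tails] using List.finite_toSet (φ c).tails

theorem nil_mem_bufferSet : [] ∈ bufferSet φ := Set.mem_insert _ _

theorem mem_bufferSet_self (c : C) : φ c ∈ bufferSet φ :=
  Set.mem_insert_of_mem _ (Set.mem_iUnion.2 ⟨c, List.suffix_refl _⟩)

variable {φ} in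
theorem mem_bufferSet_of_append {l l' : List A} (h : l ++ l' ∈ bufferSet φ) :
    l' ∈ bufferSet φ := by
  rcases h with h | h
  · rw [List.append_eq_nil_iff.1 h |>.2]; exact nil_mem_bufferSet φ
  · obtain ⟨c, hc⟩ := Set.mem_iUnion.1 h
    exact Set.mem_insert_of_mem _ (Set.mem_iUnion.2 ⟨c, (List.suffix_append l l').trans hc⟩)

/-- `M.pullLeft φ` simulates `M` on the first tape rewritten by `List.flatMap φ`. Besides the
state of `M` it keeps a buffer: the not yet simulated rest of the image `φ c` of the last letter
`c` read from the first tape. -/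
inductive PullStep : M.Q × List A → Option C → Option B → M.Q × List A → Prop
  | load (q : M.Q) (c : C) : PullStep (q, []) (some c) none (q, φ c)
  | move {q q' : M.Q} {a : Option A} {b : Option B} (w : List A) :
      M.trans q a b q' → PullStep (q, a.toList ++ w) none b (q', w)

variable {M φ} in
theorem PullStep.reaches {q q' r : M.Q} {b b' w e : List A} {x : Option C} {y : Option B}
    {u : List C} {v : List B} (t : PullStep M φ (q, b) x y (q', b')) (h : M.Reaches q' w v r)
    (hw : b' ++ u.flatMap φ = w ++ e) :
    ∃ w', M.Reaches q w' (y.toList ++ v) r ∧ b ++ (x.toList ++ u).flatMap φ = w' ++ e := by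
  cases t with
  | load q c => exact ⟨w, h, by simpa using hw⟩
  | move w' t => exact ⟨_, .step t h, by simpa using hw⟩

variable [Finite C]

instance : Finite (bufferSet φ) := bufferSet_finite.to_subtype

/-- States of an `AsyncFSA` live in `Type`, so buffers are stored through their index in the
finite set `bufferSet φ`. -/
noncomputable def bufferCode : Fin (Nat.card (bufferSet φ)) ≃ bufferSet φ :=
  (Finite.equivFin _).symm

noncomputable def pullState (q : M.Q) (b : List A) (hb : b ∈ bufferSet φ) :
    M.Q × Fin (Nat.card (bufferSet φ)) :=
  (q, (bufferCode φ).symm ⟨b, hb⟩)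

theorem bufferCode_pullState (q : M.Q) (b : List A) (hb : b ∈ bufferSet φ) :
    (bufferCode φ (pullState M φ q b hb).2 : List A) = b := by
  rw [pullState, Equiv.apply_symm_apply]

noncomputable def pullLeft : AsyncFSA C B where
  Q := M.Q × Fin (Nat.card (bufferSet φ))
  fin := have := M.fin; inferInstance
  init := pullState M φ M.init [] (nil_mem_bufferSet φ)
  accept := {s | s.1 ∈ M.accept ∧ (bufferCode φ s.2 : List A) = []}
  trans s a b s' := PullStep M φ (s.1, bufferCode φ s.2) a b (s'.1, bufferCode φ s'.2)

theorem pullLeft_init :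
    (M.pullLeft φ).init = pullState M φ M.init [] (nil_mem_bufferSet φ) := rfl

variable {M φ}

theorem Reaches.of_pullLeft {s s' : (M.pullLeft φ).Q} {u : List C} {v : List B}
    (h : (M.pullLeft φ).Reaches s u v s') :
    ∃ w, M.Reaches s.1 w v s'.1 ∧
      bufferCode φ s.2 ++ u.flatMap φ = w ++ (bufferCode φ s'.2 : List A) := by
  induction h with
  | refl => exact ⟨[], .refl _, by simp⟩
  | step t _ ih =>
    obtain ⟨w, hw, hbuf⟩ := ih
    exact t.reaches hw hbuf

theorem PullStep.pullLeft_trans {q q' : M.Q} {b b' : List A} {hb hb'} {x : Option C}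
    {y : Option B} (t : PullStep M φ (q, b) x y (q', b')) :
    (M.pullLeft φ).trans (pullState M φ q b hb) x y (pullState M φ q' b' hb') := by
  change PullStep M φ (q, bufferCode φ (pullState M φ q b hb).2) x y
    (q', bufferCode φ (pullState M φ q' b' hb').2)
  rwa [bufferCode_pullState, bufferCode_pullState]

theorem pullLeft_reaches_of_flatMap_eq_nil (q : M.Q) {u : List C} (hu : u.flatMap φ = []) :
    (M.pullLeft φ).Reaches (pullState M φ q [] (nil_mem_bufferSet φ)) u []
      (pullState M φ q [] (nil_mem_bufferSet φ)) := by
  induction u with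
  | nil => exact .refl _
  | cons c u ih =>
    rw [List.flatMap_cons, List.append_eq_nil_iff] at hu
    have hload : PullStep M φ (q, []) (some c) none (q, []) := by
      simpa only [hu.1] using PullStep.load (M := M) (φ := φ) q c
    exact .step (PullStep.pullLeft_trans hload) (ih hu.2)

/-- Reading letters from the first tape until the buffer starts with the letter `a`
consumed by the next step of `M`. -/
theorem pullLeft_reaches_load (q : M.Q) (a : Option A) {b w : List A}
    (hb : b ∈ bufferSet φ) {u : List C} (h : b ++ u.flatMap φ = a.toList ++ w) :
    ∃ (u₁ u₂ : List C) (b' : List A) (hb' : a.toList ++ b' ∈ bufferSet φ),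
      u = u₁ ++ u₂ ∧ b' ++ u₂.flatMap φ = w ∧
      (M.pullLeft φ).Reaches (pullState M φ q b hb) u₁ []
        (pullState M φ q (a.toList ++ b') hb') := by
  cases a with
  | none => exact ⟨[], u, b, hb, rfl, h, .refl _⟩
  | some a =>
    induction u generalizing b with
    | nil =>
      simp only [List.flatMap_nil, List.append_nil] at h
      subst h
      exact ⟨[], [], w, hb, rfl, by simp, .refl _⟩
    | cons c u ih =>
      cases b with
      | cons a' b' =>
        obtain ⟨rfl, hw⟩ := List.cons_eq_cons.1 h
        exact ⟨[], c :: u, b', hb, rfl, hw, .refl _⟩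
      | nil =>
        rw [List.nil_append, List.flatMap_cons] at h
        obtain ⟨u₁, u₂, b', hb', rfl, hw, hrun⟩ := ih (mem_bufferSet_self φ c) h
        exact ⟨c :: u₁, u₂, b', hb', rfl, hw,
          .step (PullStep.pullLeft_trans (.load q c)) hrun⟩

theorem Reaches.pullLeft {q q' : M.Q} {w : List A} {v : List B} (h : M.Reaches q w v q')
    {b : List A} (hb : b ∈ bufferSet φ) {u : List C} (hw : b ++ u.flatMap φ = w) :
    (M.pullLeft φ).Reaches (pullState M φ q b hb) u v
      (pullState M φ q' [] (nil_mem_bufferSet φ)) := by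
  induction h generalizing b u with
  | refl q =>
    obtain ⟨rfl, hu⟩ := List.append_eq_nil_iff.1 hw
    exact pullLeft_reaches_of_flatMap_eq_nil q hu
  | @step q q₁ q' oa ob w v t _ ih =>
    obtain ⟨u₁, u₂, b', hb', rfl, hw', hload⟩ := pullLeft_reaches_load q oa hb hw
    have hmove := Reaches.step (a := none)
      (PullStep.pullLeft_trans (hb := hb') (hb' := mem_bufferSet_of_append hb') (.move b' t))
      (ih (mem_bufferSet_of_append hb') hw')
    simpa using hload.append hmove

end PullLeft

end AsyncFSA

namespace IsRationalRel

variable {A B C D : Type*} {R : Set (List A × List B)}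

theorem preimage_swap (h : IsRationalRel R) : IsRationalRel (Prod.swap ⁻¹' R) := by
  obtain ⟨M, hM⟩ := h
  exact ⟨M.swap, fun p => (hM p.swap).trans (M.accepts_swap _ _).symm⟩

theorem preimage_flatMap_left (φ : C → List A) [Finite C] (h : IsRationalRel R) :
    IsRationalRel (Prod.map (List.flatMap φ) id ⁻¹' R) := by
  obtain ⟨M, hM⟩ := h
  refine ⟨M.pullLeft φ, fun ⟨u, v⟩ => (hM _).trans ⟨?_, ?_⟩⟩
  · rintro ⟨q, hq, hrun⟩
    exact ⟨_, ⟨hq, AsyncFSA.bufferCode_pullState ..⟩,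
      hrun.pullLeft (AsyncFSA.nil_mem_bufferSet φ) rfl⟩
  · rintro ⟨s, ⟨hq, hs⟩, hrun⟩
    obtain ⟨w, hw, hbuf⟩ := hrun.of_pullLeft
    rw [hs, AsyncFSA.pullLeft_init, AsyncFSA.bufferCode_pullState, List.nil_append,
      List.append_nil] at hbuf
    exact ⟨s.1, hq, by rwa [← hbuf] at hw⟩

theorem preimage_flatMap (φ : C → List A) (ψ : D → List B) [Finite C] [Finite D]
    (h : IsRationalRel R) :
    IsRationalRel (Prod.map (List.flatMap φ) (List.flatMap ψ) ⁻¹' R) :=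
  (((h.preimage_flatMap_left φ).preimage_swap.preimage_flatMap_left ψ).preimage_swap :)

end IsRationalRel

section evalWord

variable {α β S : Type*} [Semigroup S]

theorem foldl_mul_eq_mul_foldl (f : α → S) (x z : S) (l : List α) :
    l.foldl (fun s y => s * f y) (x * z) = x * l.foldl (fun s y => s * f y) z := by
  induction l generalizing z with
  | nil => rfl
  | cons a l ih => rw [List.foldl_cons, List.foldl_cons, ← ih, mul_assoc]

theorem evalWord_append {f : α → S} {l₁ l₂ : List α} {x y : S}
    (h₁ : evalWord f l₁ = some x) (h₂ : evalWord f l₂ = some y) :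
    evalWord f (l₁ ++ l₂) = some (x * y) := by
  match l₁, l₂, h₁, h₂ with
  | a :: l₁, b :: l₂, h₁, h₂ =>
    simp only [evalWord, Option.some_inj] at h₁ h₂
    rw [List.cons_append, evalWord, List.foldl_append, List.foldl_cons, h₁, ← h₂,
      foldl_mul_eq_mul_foldl]

theorem exists_evalWord_eq_some (f : α → S) {l : List α} (hl : l ≠ []) :
    ∃ x, evalWord f l = some x := by
  obtain ⟨a, l, rfl⟩ := List.exists_cons_of_ne_nil hl
  exact ⟨_, rfl⟩

theorem evalWord_flatMap {f : α → S} {g : β → S} {φ : β → List α}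
    (hφ : ∀ b, evalWord f (φ b) = some (g b)) {u : List β} (hu : u ≠ []) :
    evalWord f (u.flatMap φ) = evalWord g u := by
  induction u with
  | nil => exact absurd rfl hu
  | cons b u ih =>
    rcases eq_or_ne u [] with rfl | hu
    · rw [List.flatMap_cons, List.flatMap_nil, List.append_nil]
      exact hφ b
    obtain ⟨x, hx⟩ := exists_evalWord_eq_some g hu
    rw [List.flatMap_cons, evalWord_append (hφ b) ((ih hu).trans hx), ← List.singleton_append,
      evalWord_append rfl hx]
    rfl

end evalWord

theorem Subsemigroup.exists_evalWord_eq_of_mem_closure {S : Type*} [Semigroup S] {A : Set S}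
    {x : S} (hx : x ∈ Subsemigroup.closure A) :
    ∃ l : List A, l ≠ [] ∧ evalWord Subtype.val l = some x := by
  induction hx using Subsemigroup.closure_induction with
  | mem a ha => exact ⟨[⟨a, ha⟩], List.cons_ne_nil _ _, rfl⟩
  | mul a b _ _ iha ihb =>
    obtain ⟨l₁, hl₁, h₁⟩ := iha
    obtain ⟨l₂, -, h₂⟩ := ihb
    exact ⟨l₁ ++ l₂, by simp [hl₁], evalWord_append h₁ h₂⟩

theorem SWP_eq_preimage_flatMap {S : Type*} [Semigroup S] {A C : Set S} {φ : C → List A}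
    (hφ : ∀ c, φ c ≠ []) (hφeval : ∀ c, evalWord Subtype.val (φ c) = some c.val) :
    SWP C = Prod.map (List.flatMap φ) (List.flatMap φ) ⁻¹' SWP A := by
  have hne (u : List C) : u.flatMap φ ≠ [] ↔ u ≠ [] :=
    not_congr <| List.flatMap_eq_nil_iff.trans ⟨fun h =>
      List.eq_nil_iff_forall_not_mem.2 fun c hc => hφ c (h c hc), by rintro rfl; simp⟩
  ext ⟨u, v⟩
  simp only [SWP, Set.mem_preimage, Set.mem_ofPred_eq, Prod.map, hne]
  refine and_congr_right fun hu => and_congr_right fun hv => ?_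
  rw [evalWord_flatMap hφeval hu, evalWord_flatMap hφeval hv]

theorem stmt_9_general {S : Type*} [Semigroup S] (A : Set S)
    (hgen : Subsemigroup.closure A = ⊤) (hrat : IsRationalRel (SWP A)) :
    ∀ C : Set S, C.Finite → IsRationalRel (SWP C) := by
  intro C hC
  have : Finite C := hC.to_subtype
  choose φ hφ hφeval using fun c : C =>
    Subsemigroup.exists_evalWord_eq_of_mem_closure (hgen ▸ Subsemigroup.mem_top c.val)
  rw [SWP_eq_preimage_flatMap hφ hφeval]
  exact hrat.preimage_flatMap φ φ

/-- Every finitely generated subsemigroup of a semigroup with rational word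
problem has rational word problem. -/
theorem stmt_9 {S : Type*} [Semigroup S] (A : Set S) (hA : A.Finite)
    (hgen : Subsemigroup.closure A = ⊤) (hrat : IsRationalRel (SWP A)) :
    ∀ C : Set S, C.Finite → IsRationalRel (SWP C) :=
  stmt_9_general A hgen hrat
end

section
/- A finitely generated semigroup S has SWP(S,A) regular for every finite generating set A if and only if S is finite. -/
section WordProd

variable {S : Type*} [Semigroup S] {α : Type*}

def wordProd (f : α → S) (w : List α) : WithOne S :=
  (w.map fun a => (f a : WithOne S)).prod

@[simp] lemma wordProd_nil (f : α → S) : wordProd f [] = 1 := rfl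

@[simp] lemma wordProd_append (f : α → S) (u v : List α) :
    wordProd f (u ++ v) = wordProd f u * wordProd f v := by
  simp [wordProd]

lemma wordProd_flatten_replicate (f : α → S) (k : ℕ) (y : List α) :
    wordProd f (List.replicate k y).flatten = wordProd f y ^ k := by
  induction k with
  | zero => simp
  | succ k ih => rw [List.replicate_succ', List.flatten_concat, wordProd_append, ih, pow_succ]

lemma wordProd_replicate (f : α → S) (k : ℕ) (a : α) :
    wordProd f (List.replicate k a) = (f a : WithOne S) ^ k := by
  simp [wordProd, List.map_replicate]

lemma coe_foldl_mul (f : α → S) (s : S) (l : List α) :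
    ((List.foldl (fun t x => t * f x) s l : S) : WithOne S) = s * wordProd f l := by
  induction l generalizing s with
  | nil => simp
  | cons b l ih => simp [ih, wordProd, mul_assoc]

/-- `WithOne S` is `Option S` with `none` as the identity, so `evalWord` is a product there. -/
lemma evalWord_eq_wordProd (f : α → S) (w : List α) :
    (evalWord f w : WithOne S) = wordProd f w := by
  cases w with
  | nil => rfl
  | cons a l => exact (coe_foldl_mul f (f a) l).trans (by simp [wordProd])

lemma wordProd_eq_one_iff (f : α → S) {w : List α} : wordProd f w = 1 ↔ w = [] := by
  cases w with
  | nil => simp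
  | cons a l =>
    rw [← evalWord_eq_wordProd]
    exact iff_of_false WithOne.coe_ne_one (List.cons_ne_nil a l)

lemma mem_SWP_iff {A : Set S} {u v : List A} :
    (u, v) ∈ SWP A ↔ u ≠ [] ∧ v ≠ [] ∧ wordProd Subtype.val u = wordProd Subtype.val v := by
  change _ ∧ _ ∧ (evalWord _ u : WithOne S) = evalWord _ v ↔ _
  rw [evalWord_eq_wordProd, evalWord_eq_wordProd]
  rfl

lemma exists_wordProd_eq_coe {A : Set S} (hA : Subsemigroup.closure A = ⊤) (s : S) :
    ∃ w : List A, wordProd Subtype.val w = s := by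
  induction (hA ▸ Subsemigroup.mem_top s : s ∈ Subsemigroup.closure A)
    using Subsemigroup.closure_induction with
  | mem x hx => exact ⟨[⟨x, hx⟩], by simp [wordProd]⟩
  | mul x y _ _ ihx ihy =>
    obtain ⟨u, hu⟩ := ihx
    obtain ⟨v, hv⟩ := ihy
    exact ⟨u ++ v, by simp [hu, hv]⟩

end WordProd

section PadPair

variable {α : Type*}

@[simp] lemma padPair_cons_cons (a b : α) (u v : List α) :
    padPair (a :: u, b :: v) = (some a, some b) :: padPair (u, v) := by
  simp [padPair]

@[simp] lemma padPair_cons_nil (a : α) (u : List α) :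
    padPair (a :: u, []) = (some a, none) :: padPair (u, []) := by
  simp [padPair, List.replicate_succ]

lemma padPair_map_fst (p : List α × List α) :
    (padPair p).map Prod.fst = p.1.map some ++ List.replicate (p.2.length - p.1.length) none :=
  List.map_fst_zip (by simp; omega)

lemma padPair_map_snd (p : List α × List α) :
    (padPair p).map Prod.snd = p.2.map some ++ List.replicate (p.1.length - p.2.length) none :=
  List.map_snd_zip (by simp; omega)

lemma padPair_replicate (a b : α) (m d : ℕ) :
    padPair (List.replicate m a, List.replicate (m + d) b) =
      List.replicate m (some a, some b) ++ List.replicate d (none, some b) := by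
  rw [padPair]
  simp only [List.map_replicate, List.length_replicate]
  rw [Nat.add_sub_cancel_left, show m - (m + d) = 0 by omega, List.replicate_zero,
    List.append_nil, List.replicate_add, List.zip_append (by simp)]
  simp

lemma IsRegularRel.of_dfa {R : Set (List α × List α)} {σ : Type*} [Finite σ]
    (M : DFA (Option α × Option α) σ) (hM : ∀ p, p ∈ R ↔ padPair p ∈ M.accepts) :
    IsRegularRel R := by
  obtain ⟨σ', _, M', hM'⟩ :=
    (Language.isRegular_iff.mpr ⟨σ, Fintype.ofFinite σ, M, rfl⟩ : M.accepts.IsRegular)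
  exact ⟨σ', ‹_›, M', by rwa [hM']⟩

end PadPair

section PairProd

variable {α M : Type*} [Monoid M]

def pairProdDFA (f : α → M) (accept : Set (M × M)) : DFA (Option α × Option α) (M × M) where
  step q c := (q.1 * ((c.1.map f).getD 1), q.2 * ((c.2.map f).getD 1))
  start := (1, 1)
  accept := accept

lemma pairProdDFA_evalFrom (f : α → M) (accept : Set (M × M)) (q : M × M)
    (w : List (Option α × Option α)) :
    (pairProdDFA f accept).evalFrom q w =
      (q.1 * (w.map fun c => (c.1.map f).getD 1).prod,
        q.2 * (w.map fun c => (c.2.map f).getD 1).prod) := by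
  induction w generalizing q with
  | nil => simp
  | cons c w ih =>
    rw [DFA.evalFrom_cons, ih]
    simp [pairProdDFA, mul_assoc]

lemma prod_map_getD_padded (f : α → M) (u : List α) (k : ℕ) :
    ((u.map some ++ List.replicate k none).map fun c : Option α => (c.map f).getD 1).prod =
      (u.map f).prod := by
  simp [List.map_replicate, Function.comp_def]

lemma pairProdDFA_eval_padPair (f : α → M) (accept : Set (M × M)) (p : List α × List α) :
    (pairProdDFA f accept).eval (padPair p) = ((p.1.map f).prod, (p.2.map f).prod) := by
  have hmap (g : Option α × Option α → Option α) :
      (padPair p).map (fun c => ((g c).map f).getD 1) =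
        ((padPair p).map g).map fun c => (c.map f).getD 1 := by
    rw [List.map_map]; rfl
  rw [DFA.eval, pairProdDFA_evalFrom, hmap Prod.fst, hmap Prod.snd, padPair_map_fst,
    padPair_map_snd, prod_map_getD_padded, prod_map_getD_padded]
  simp [pairProdDFA]

end PairProd

theorem isRegularRel_SWP_of_finite {S : Type*} [Semigroup S] [Finite S] (A : Set S) :
    IsRegularRel (SWP A) := by
  have : Finite (WithOne S) := inferInstanceAs (Finite (Option S))
  refine .of_dfa (pairProdDFA (fun a : A => ((a : S) : WithOne S)) {q | q.1 = q.2 ∧ q.1 ≠ 1})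
    fun ⟨u, v⟩ => ?_
  rw [mem_SWP_iff, DFA.mem_accepts, pairProdDFA_eval_padPair]
  change _ ↔ wordProd Subtype.val u = wordProd Subtype.val v ∧ ¬wordProd Subtype.val u = 1
  rw [wordProd_eq_one_iff]
  constructor
  · rintro ⟨hu, -, h⟩
    exact ⟨h, hu⟩
  · rintro ⟨h, hu⟩
    refine ⟨hu, fun hv => hu ?_, h⟩
    rwa [← wordProd_eq_one_iff Subtype.val, h, wordProd_eq_one_iff]

section ShorterPartner

variable {α σ : Type*} (M : DFA (Option α × Option α) σ)

/-- Guesses, letter by letter, a partner word `v` for the input `u` and runs `M` on the padded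
pair; the flag records that `v` has already ended. -/
def shorterPartnerNFA : NFA α (σ × Bool) where
  step p a := {p' | p' = (M.step p.1 (some a, none), true) ∨
    p.2 = false ∧ ∃ b, p' = (M.step p.1 (some a, some b), false)}
  start := {(M.start, false)}
  accept := {p | p.1 ∈ M.accept ∧ p.2 = true}

lemma shorterPartnerNFA_step_true (q : σ) (a : α) :
    (shorterPartnerNFA M).step (q, true) a = {(M.step q (some a, none), true)} := by
  ext
  simp [shorterPartnerNFA]

lemma mem_shorterPartnerNFA_step_false {q : σ} {a : α} {p' : σ × Bool} :
    p' ∈ (shorterPartnerNFA M).step (q, false) a ↔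
      p' = (M.step q (some a, none), true) ∨ ∃ b, p' = (M.step q (some a, some b), false) := by
  simp [shorterPartnerNFA]

lemma shorterPartnerNFA_evalFrom_true (q : σ) (u : List α) :
    (shorterPartnerNFA M).evalFrom {(q, true)} u = {(M.evalFrom q (padPair (u, [])), true)} := by
  induction u generalizing q with
  | nil => simp [padPair]
  | cons a u ih =>
    rw [NFA.evalFrom_cons, NFA.stepSet_singleton, shorterPartnerNFA_step_true, ih]
    simp

lemma mem_shorterPartnerNFA_evalFrom_false {q q' : σ} {d : Bool} {u : List α} :
    (q', d) ∈ (shorterPartnerNFA M).evalFrom {(q, false)} u ↔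
      ∃ v : List α, v.length ≤ u.length ∧ d = decide (v.length < u.length) ∧
        q' = M.evalFrom q (padPair (u, v)) := by
  induction u generalizing q q' d with
  | nil =>
    simp only [NFA.evalFrom_nil, Set.mem_singleton_iff, Prod.mk.injEq, List.length_nil,
      Nat.le_zero, List.length_eq_zero_iff, Nat.not_lt_zero, decide_false]
    constructor
    · rintro ⟨rfl, rfl⟩
      exact ⟨[], rfl, rfl, by simp [padPair]⟩
    · rintro ⟨v, rfl, rfl, rfl⟩
      simp
  | cons a u ih =>
    rw [NFA.evalFrom_cons, NFA.stepSet_singleton, NFA.mem_evalFrom_iff_exists]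
    simp only [mem_shorterPartnerNFA_step_false]
    constructor
    · rintro ⟨t, rfl | ⟨b, rfl⟩, ht⟩
      · rw [shorterPartnerNFA_evalFrom_true, Set.mem_singleton_iff] at ht
        obtain ⟨rfl, rfl⟩ := Prod.mk.inj ht
        exact ⟨[], by simp, by simp, by simp⟩
      · obtain ⟨v, hv, rfl, rfl⟩ := ih.mp ht
        exact ⟨b :: v, by simpa using hv, by simp, by simp⟩
    · rintro ⟨v, hv, rfl, rfl⟩
      cases v with
      | nil => exact ⟨_, Or.inl rfl, by simp [shorterPartnerNFA_evalFrom_true]⟩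
      | cons b v =>
        simp only [List.length_cons, Nat.add_le_add_iff_right] at hv
        exact ⟨_, Or.inr ⟨b, rfl⟩, ih.mpr ⟨v, hv, by simp, by simp⟩⟩

lemma mem_shorterPartnerNFA_accepts {u : List α} :
    u ∈ (shorterPartnerNFA M).accepts ↔
      ∃ v : List α, v.length < u.length ∧ padPair (u, v) ∈ M.accepts := by
  rw [NFA.mem_accepts]
  constructor
  · rintro ⟨⟨q', d⟩, ⟨hq', rfl⟩, h⟩
    obtain ⟨v, -, hv, rfl⟩ := (mem_shorterPartnerNFA_evalFrom_false M).mp h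
    exact ⟨v, of_decide_eq_true hv.symm, hq'⟩
  · rintro ⟨v, hv, hacc⟩
    exact ⟨(M.eval (padPair (u, v)), true), ⟨hacc, rfl⟩,
      (mem_shorterPartnerNFA_evalFrom_false M).mpr ⟨v, hv.le, by simp [hv], rfl⟩⟩

end ShorterPartner

theorem IsRegularRel.isRegular_setOf_exists_shorter {α : Type*} {R : Set (List α × List α)}
    (hR : IsRegularRel R) :
    Language.IsRegular ({u | ∃ v, v.length < u.length ∧ (u, v) ∈ R} : Language α) := by
  classical
  obtain ⟨σ, _, M, hM⟩ := hR
  refine ⟨Set (σ × Bool), inferInstance, (shorterPartnerNFA M).toDFA, ?_⟩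
  ext u
  rw [NFA.toDFA_correct, mem_shorterPartnerNFA_accepts]
  simp only [hM]
  rfl

open scoped Computability in
lemma Language.append_flatten_replicate_append_mem {α : Type*} {L : Language α} {a b c : List α}
    (h : {a} * {b}∗ * {c} ≤ L) (k : ℕ) : a ++ (List.replicate k b).flatten ++ c ∈ L :=
  h (Language.append_mem_mul (Language.append_mem_mul rfl
    (Language.mem_kstar.mpr ⟨_, rfl, fun _ hy => List.eq_of_mem_replicate hy⟩)) rfl)

theorem Language.IsRegular.exists_pumping {α : Type*} {L : Language α} (hL : L.IsRegular)
    (hlong : ∀ n, ∃ u ∈ L, n ≤ u.length) :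
    ∃ a b c : List α, b ≠ [] ∧ ∀ k, a ++ (List.replicate k b).flatten ++ c ∈ L := by
  obtain ⟨σ, _, M, rfl⟩ := hL
  obtain ⟨u, hu, hlen⟩ := hlong (Fintype.card σ)
  obtain ⟨a, b, c, -, -, hb, hpump⟩ := M.pumping_lemma hu hlen
  exact ⟨a, b, c, hb, Language.append_flatten_replicate_append_mem hpump⟩

section Geodesic

variable {S : Type*} [Semigroup S] {A : Set S}

def IsGeodesic (A : Set S) (u : List A) : Prop :=
  ∀ v : List A, v.length < u.length → (u, v) ∉ SWP A

lemma IsGeodesic.wordProd_ne {u v : List A} (hu : IsGeodesic A u) (hne : u ≠ [])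
    (hv : v.length < u.length) : wordProd Subtype.val v ≠ wordProd Subtype.val u := by
  intro h
  refine hu v hv (mem_SWP_iff.mpr ⟨hne, fun hv₀ => hne ?_, h.symm⟩)
  rwa [← wordProd_eq_one_iff Subtype.val, ← h, wordProd_eq_one_iff]

theorem exists_isGeodesic_wordProd_eq (u : List A) :
    ∃ g, IsGeodesic A g ∧ wordProd Subtype.val g = wordProd Subtype.val u := by
  by_cases hu : IsGeodesic A u
  · exact ⟨u, hu, rfl⟩
  · obtain ⟨v, hv, huv⟩ : ∃ v, v.length < u.length ∧ (u, v) ∈ SWP A := by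
      simpa [IsGeodesic] using hu
    obtain ⟨g, hg, hgv⟩ := exists_isGeodesic_wordProd_eq v
    exact ⟨g, hg, hgv.trans (mem_SWP_iff.mp huv).2.2.symm⟩
termination_by u.length

theorem IsRegularRel.isRegular_setOf_isGeodesic (h : IsRegularRel (SWP A)) :
    Language.IsRegular ({u | IsGeodesic A u} : Language A) := by
  have : ({u | IsGeodesic A u} : Language A) =
      ({u | ∃ v, v.length < u.length ∧ (u, v) ∈ SWP A} : Language A)ᶜ := by
    ext u
    simp [IsGeodesic]
  exact this ▸ h.isRegular_setOf_exists_shorter.compl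

/-- Every element is represented by a geodesic, and there are only finitely many short words. -/
theorem exists_isGeodesic_length_ge [Infinite S] (hA : A.Finite)
    (hgen : Subsemigroup.closure A = ⊤) (n : ℕ) : ∃ u, IsGeodesic A u ∧ n ≤ u.length := by
  by_contra! hshort
  have : Finite A := hA.to_subtype
  have hrange : Set.range ((↑) : S → WithOne S) ⊆
      wordProd Subtype.val '' {w : List A | w.length ≤ n} := by
    rintro _ ⟨s, rfl⟩
    obtain ⟨w, hw⟩ := exists_wordProd_eq_coe hgen s
    obtain ⟨g, hg, hgw⟩ := exists_isGeodesic_wordProd_eq w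
    exact ⟨g, (hshort g hg).le, hgw.trans hw⟩
  have : Finite S := (Set.finite_range_iff WithOne.coe_injective).mp
    (((List.finite_length_le A n).image _).subset hrange)
  exact not_finite S

theorem IsRegularRel.exists_injective_pow [Infinite S] (hA : A.Finite)
    (hgen : Subsemigroup.closure A = ⊤) (h : IsRegularRel (SWP A)) :
    ∃ z : S, Function.Injective fun n : ℕ => (z : WithOne S) ^ n := by
  obtain ⟨x, y, r, hy, hpump⟩ := h.isRegular_setOf_isGeodesic.exists_pumping
    fun n => exists_isGeodesic_length_ge hA hgen n
  obtain ⟨z, hz⟩ := WithOne.ne_one_iff_exists.mp (mt (wordProd_eq_one_iff Subtype.val).mp hy)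
  refine ⟨z, .of_lt_imp_ne fun m m' hmm' heq => ?_⟩
  have hlen : ∀ k, (x ++ (List.replicate k y).flatten ++ r).length =
      x.length + k * y.length + r.length := by
    simp [List.sum_replicate, add_assoc]
  refine (hpump m').wordProd_ne (v := x ++ (List.replicate m y).flatten ++ r) ?_ ?_ ?_
  · rw [← List.length_pos_iff, hlen]
    have := Nat.mul_pos (by omega : 0 < m') (List.length_pos_iff.mpr hy)
    omega
  · rw [hlen, hlen]
    have := Nat.mul_lt_mul_of_pos_right hmm' (List.length_pos_iff.mpr hy)
    omega
  · simp only [wordProd_append, wordProd_flatten_replicate, ← hz]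
    rw [heq]

end Geodesic

lemma List.eq_replicate_of_append_eq_replicate_append {α : Type*} {l c w : List α} {x : α}
    {n : ℕ} (h : l ++ c = List.replicate n x ++ w) (hl : l.length ≤ n) :
    l = List.replicate l.length x := by
  have := congrArg (List.take l.length) h
  rwa [List.take_left, List.take_append_of_le_length (by simpa using hl),
    List.take_replicate, min_eq_left hl] at this

/-- Pumping the prefix `(t, s)ᵏ` of the padded pair `(tⁿ, s²ⁿ)` adds `2k` to the exponent of `s`
on the left but only `k` on the right. -/
theorem not_isRegularRel_SWP_of_injective_pow {S : Type*} [Semigroup S] {B : Set S} {s t : B}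
    (hst : (t : S) = s * s) (hs : Function.Injective fun n : ℕ => ((s : S) : WithOne S) ^ n) :
    ¬IsRegularRel (SWP B) := by
  rintro ⟨Q, _, M, hM⟩
  set n := Fintype.card Q + 1
  have hSWP : ∀ k, (List.replicate (k + n) t, List.replicate (k + n + n) s) ∈ SWP B ↔ k = 0 := by
    intro k
    have hne : ∀ m (b : B), 0 < m → List.replicate m b ≠ [] := fun m b hm => by
      simpa using hm.ne'
    rw [mem_SWP_iff, wordProd_replicate, wordProd_replicate, hst, WithOne.coe_mul, ← pow_two,
      ← pow_mul]
    simp only [hne _ _ (by omega : 0 < k + n), hne _ _ (by omega : 0 < k + n + n), ne_eq,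
      not_false_eq_true, true_and]
    exact hs.eq_iff.trans (by omega)
  have hpad : ∀ k, padPair (List.replicate (k + n) t, List.replicate (k + n + n) s) =
      List.replicate (k + n) (some t, some s) ++ List.replicate n (none, some s) :=
    fun k => padPair_replicate t s (k + n) n
  have hacc := (hM _).mp ((hSWP 0).mpr rfl)
  rw [hpad, zero_add] at hacc
  obtain ⟨a, b, c, hw, hlen, hb, hpump⟩ := M.pumping_lemma hacc (by simp; omega)
  obtain ⟨-, ha, hb'⟩ := List.append_eq_replicate_iff.mp
    (List.eq_replicate_of_append_eq_replicate_append hw.symm (by simp; omega))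
  have hcomm : a ++ b = b ++ a := by
    rw [ha, hb', ← List.replicate_add, ← List.replicate_add, Nat.add_comm]
  have hpumped := Language.append_flatten_replicate_append_mem hpump 2
  have hpumped_eq : a ++ (List.replicate 2 b).flatten ++ c = b ++ (a ++ b ++ c) := by
    simp only [List.replicate, List.flatten_cons, List.flatten_nil, List.append_nil]
    conv_lhs => rw [← List.append_assoc a b b, hcomm]
    simp only [List.append_assoc]
  rw [hpumped_eq, ← hw, hb', ← List.append_assoc, ← List.replicate_add, ← hpad] at hpumped
  exact hb (List.length_eq_zero_iff.mp ((hSWP _).mp ((hM _).mpr hpumped)))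

/-- A finitely generated semigroup has regular word problem with respect to
every finite generating set iff it is finite. -/
theorem stmt_13 {S : Type*} [Semigroup S]
    (hfg : ∃ A : Set S, A.Finite ∧ Subsemigroup.closure A = ⊤) :
    (∀ A : Set S, A.Finite → Subsemigroup.closure A = ⊤ →
      IsRegularRel (SWP A)) ↔ Finite S := by
  refine ⟨fun hreg => ?_, fun _ A _ _ => isRegularRel_SWP_of_finite A⟩
  by_contra hfin
  have : Infinite S := not_finite_iff_infinite.mp hfin
  obtain ⟨A, hA, hgen⟩ := hfg
  obtain ⟨z, hz⟩ := (hreg A hA hgen).exists_injective_pow hA hgen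
  let B : Set S := A ∪ {z, z * z}
  have hB : B.Finite := hA.union ((Set.finite_singleton _).insert z)
  have hBgen : Subsemigroup.closure B = ⊤ :=
    top_le_iff.mp (hgen ▸ Subsemigroup.closure_mono Set.subset_union_left)
  exact not_isRegularRel_SWP_of_injective_pow (s := ⟨z, by simp [B]⟩) (t := ⟨z * z, by simp [B]⟩)
    rfl hz (hreg B hB hBgen)
end

section
/- Let M be a finitely generated monoid with rational word problem. Then the group of units U(M) of M is finite. -/
/-!
A unit is determined by its right inverse: `u' * u⁻¹ = 1` forces `u' = u`. On a pair `(x, ε)`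
the automaton only moves on its first tape, so the set of states it can reach after a prefix `x`
determines every continuation `y` for which `x ++ y` represents `1`. Words for distinct units
therefore reach distinct sets of states, of which there are finitely many.
-/

namespace AsyncFSA

variable {A B : Type*} {N : AsyncFSA A B}

theorem Reaches.append_s14 {p q r : N.Q} {u₁ u₂ : List A} {v₁ v₂ : List B}
    (h₁ : N.Reaches p u₁ v₁ q) (h₂ : N.Reaches q u₂ v₂ r) :
    N.Reaches p (u₁ ++ u₂) (v₁ ++ v₂) r := by
  induction h₁ with
  | refl => simpa using h₂
  | step ht _ ih => simpa [List.append_assoc] using Reaches.step ht (ih h₂)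

theorem Reaches.exists_split_of_right_nil {p r : N.Q} {u₁ u₂ : List A}
    (h : N.Reaches p (u₁ ++ u₂) [] r) :
    ∃ q, N.Reaches p u₁ [] q ∧ N.Reaches q u₂ [] r := by
  generalize hw : u₁ ++ u₂ = w at h
  generalize hv : ([] : List B) = v at h
  induction h generalizing u₁ with
  | refl q =>
    obtain ⟨rfl, rfl⟩ := List.append_eq_nil_iff.mp hw
    exact ⟨q, .refl q, .refl q⟩
  | @step p' _ _ a b u _ ht hr ih =>
    obtain ⟨hb, rfl⟩ := List.append_eq_nil_iff.mp hv.symm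
    obtain rfl : b = none := Option.toList_eq_nil_iff.mp hb
    cases u₁ with
    | nil =>
      rw [List.nil_append] at hw
      exact ⟨p', .refl p', by simpa [hw] using Reaches.step ht hr⟩
    | cons c u₁ =>
      cases a with
      | none =>
        obtain ⟨q, hq₁, hq₂⟩ := ih hw rfl
        exact ⟨q, by simpa using Reaches.step ht hq₁, hq₂⟩
      | some a =>
        simp only [Option.toList_some, List.cons_append, List.cons.injEq] at hw
        obtain ⟨rfl, hw⟩ := hw
        obtain ⟨q, hq₁, hq₂⟩ := ih hw rfl
        exact ⟨q, by simpa using Reaches.step ht hq₁, hq₂⟩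

def leftStates (N : AsyncFSA A B) (u : List A) : Set N.Q :=
  {q | N.Reaches N.init u [] q}

theorem accepts_append_nil_of_leftStates_eq {u u' v : List A}
    (h : N.leftStates u = N.leftStates u') (hacc : N.Accepts (u ++ v) []) :
    N.Accepts (u' ++ v) [] := by
  obtain ⟨qf, hqf, hr⟩ := hacc
  obtain ⟨q, hq, hqr⟩ := hr.exists_split_of_right_nil
  have hq' : q ∈ N.leftStates u' := h ▸ hq
  exact ⟨qf, hqf, by simpa using hq'.append_s14 hqr⟩

end AsyncFSA

theorem exists_list_map_val_prod_eq {M : Type*} [Monoid M] {A : Set M}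
    (hgen : Submonoid.closure A = ⊤) (m : M) :
    ∃ w : List A, (w.map Subtype.val).prod = m := by
  obtain ⟨l, hl, hp⟩ := Submonoid.exists_list_of_mem_closure (hgen ▸ Submonoid.mem_top m)
  exact ⟨l.pmap Subtype.mk hl, by simpa [List.map_pmap, List.pmap_eq_map] using hp⟩

theorem mem_MWP_append_nil_iff {M : Type*} [Monoid M] {A : Set M} {x y : List A} :
    (x ++ y, []) ∈ MWP A ↔ (x.map Subtype.val).prod * (y.map Subtype.val).prod = 1 := by
  simp [MWP]

theorem stmt_14_general {M : Type*} [Monoid M] (A : Set M)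
    (hgen : Submonoid.closure A = ⊤) (hrat : IsRationalRel (MWP A)) :
    Finite Mˣ := by
  obtain ⟨N, hN⟩ := hrat
  have := N.fin
  choose w hw using fun u : Mˣ => exists_list_map_val_prod_eq hgen (u : M)
  have mem_MWP (u v : Mˣ) : (w u ++ w v, []) ∈ MWP A ↔ u * v = 1 := by
    rw [mem_MWP_append_nil_iff, hw, hw, ← Units.val_mul, Units.val_eq_one]
  refine Finite.of_injective (fun u => N.leftStates (w u)) fun u u' h => ?_
  have hacc := (hN _).1 ((mem_MWP u u⁻¹).2 (mul_inv_cancel u))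
  have hacc' := N.accepts_append_nil_of_leftStates_eq h hacc
  exact (mul_inv_eq_one.mp ((mem_MWP u' u⁻¹).1 ((hN _).2 hacc'))).symm

/-- A finitely generated monoid with rational word problem has a finite group
of units. -/
theorem stmt_14 {M : Type*} [Monoid M] (A : Set M) (hA : A.Finite)
    (hgen : Submonoid.closure A = ⊤) (hrat : IsRationalRel (MWP A)) :
    Finite Mˣ :=
  stmt_14_general A hgen hrat
end
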